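/- arXiv:2501.19272 — 2 statements merged into one kernel-verified Lean document; each statement's English description precedes it below -/
import Mathlib

section
/- Let CP_{(2,0)}(n) denote the generating function (in q) for cylindric partitions with profile (2,0) in which each row has at most n parts. Then CP_{(2,0)}(n) = (-q^2;q^2)_{n-1} / (q;q)_{2n} for n ≥ 1. -/
/-!
Interleave the two rows into the word `a₀ b₀ a₁ b₁ …`. The cylindric conditions say that this
word is weakly decreasing except at the steps `bᵢ → aᵢ₊₁` (`i < n - 1`) where it may increase.
Swapping every such crossing pair gives a weakly decreasing word `d` of length `2n` that drops
strictly from position `2i+1` to `2i+2` at each crossing `i`, and the crossings are read back off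
`d`. Lowering the first `2i + 2` letters of `d` by one for every crossing `i` leaves an arbitrary
partition into at most `2n` parts, counted by `1 / (q;q)_{2n}`, while the crossing at `i`
accounts for `q^{2i+2}`: this is the factor `(-q²;q²)_{n-1}`.
-/

open PowerSeries Finset

namespace PowerSeries

theorem coeff_prod_mk_ite {R ι : Type*} [CommSemiring R] [DecidableEq ι] (s : Finset ι)
    (P : ι → ℕ → Prop) [∀ i, DecidablePred (P i)] (N : ℕ) :
    coeff N (∏ i ∈ s, mk fun k => if P i k then (1 : R) else 0) =
      #{l ∈ finsuppAntidiag s N | ∀ i ∈ s, P i (l i)} := by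
  simp only [coeff_prod, coeff_mk, prod_boole, sum_boole]

theorem mk_dvd_mul_one_sub_X_pow {R : Type*} [Ring R] {m : ℕ} (hm : m ≠ 0) :
    (mk fun k => if m ∣ k then (1 : R) else 0) * (1 - X ^ m) = 1 := by
  ext k
  rw [mul_sub, mul_one, map_sub, coeff_mul_X_pow', coeff_mk, coeff_one]
  by_cases hk : m ≤ k
  · rw [if_pos hk, coeff_mk, if_neg (show k ≠ 0 by omega), sub_eq_zero]
    exact if_congr (Nat.dvd_sub_iff_left hk dvd_rfl).symm rfl rfl
  · rw [if_neg hk, sub_zero]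
    rcases Nat.eq_zero_or_pos k with rfl | hk0
    · simp
    · rw [if_neg (fun h => hk (Nat.le_of_dvd hk0 h)), if_neg hk0.ne']

theorem inv_prod_one_sub_X_pow {k ι : Type*} [Field k] (s : Finset ι) (e : ι → ℕ)
    (he : ∀ i ∈ s, e i ≠ 0) :
    (∏ i ∈ s, (1 - X ^ e i : k⟦X⟧))⁻¹ = ∏ i ∈ s, mk fun k => if e i ∣ k then 1 else 0 := by
  rw [PowerSeries.inv_eq_iff_mul_eq_one, ← prod_mul_distrib]
  · exact prod_eq_one fun i hi => mk_dvd_mul_one_sub_X_pow (he i hi)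
  · simp only [map_prod, map_sub, map_one, map_pow, constantCoeff_X]
    exact prod_ne_zero_iff.2 fun i hi => by simp [zero_pow (he i hi)]

theorem one_add_X_pow_eq_mk {R : Type*} [Semiring R] {m : ℕ} (hm : m ≠ 0) :
    (1 + X ^ m : R⟦X⟧) = mk fun k => if k = 0 ∨ k = m then 1 else 0 := by
  ext k
  rw [map_add, coeff_one, coeff_X_pow, coeff_mk]
  split_ifs <;> simp_all

end PowerSeries

namespace CylindricPartition

section SwapPairs

variable (S : Finset ℕ)

/-- The involution of `ℕ` exchanging `2 * i + 1` and `2 * i + 2` for every `i ∈ S`. -/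
def swapPairs (p : ℕ) : ℕ :=
  if p % 2 = 1 ∧ p / 2 ∈ S then p + 1
  else if p % 2 = 0 ∧ 0 < p ∧ p / 2 - 1 ∈ S then p - 1 else p

variable {S}

theorem swapPairs_two_mul (i : ℕ) :
    swapPairs S (2 * i) = if 0 < i ∧ i - 1 ∈ S then 2 * i - 1 else 2 * i := by
  simp only [swapPairs, Nat.mul_mod_right, Nat.mul_div_cancel_left i two_pos, zero_ne_one,
    false_and, if_false, true_and, Nat.ofNat_pos, mul_pos_iff_of_pos_left]

theorem swapPairs_two_mul_add_one (i : ℕ) :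
    swapPairs S (2 * i + 1) = if i ∈ S then 2 * i + 2 else 2 * i + 1 := by
  have h : (2 * i + 1) / 2 = i := by omega
  unfold swapPairs
  by_cases hi : i ∈ S
  · rw [if_pos ⟨by omega, by rwa [h]⟩, if_pos hi]
  · rw [if_neg fun hc => hi (h ▸ hc.2), if_neg (by omega), if_neg hi]

theorem swapPairs_two_mul_add_two (i : ℕ) :
    swapPairs S (2 * i + 2) = if i ∈ S then 2 * i + 1 else 2 * i + 2 := by
  rw [show 2 * i + 2 = 2 * (i + 1) by ring, swapPairs_two_mul]
  simp only [Nat.add_sub_cancel, Nat.succ_pos, true_and]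
  split_ifs <;> omega

theorem swapPairs_involutive : Function.Involutive (swapPairs S) := by
  intro p
  obtain ⟨i, rfl | rfl⟩ := Nat.even_or_odd' p
  · rcases Nat.eq_zero_or_pos i with rfl | hi
    · have h0 : swapPairs S 0 = 0 := by simp [swapPairs]
      rw [mul_zero, h0, h0]
    · obtain ⟨j, rfl⟩ : ∃ j, i = j + 1 := ⟨i - 1, by omega⟩
      rw [show 2 * (j + 1) = 2 * j + 2 by ring, swapPairs_two_mul_add_two]
      split_ifs with h
      · rw [swapPairs_two_mul_add_one, if_pos h]
      · rw [swapPairs_two_mul_add_two, if_neg h]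
  · rw [swapPairs_two_mul_add_one]
    split_ifs with h
    · rw [swapPairs_two_mul_add_two, if_pos h]
    · rw [swapPairs_two_mul_add_one, if_neg h]

theorem swapPairs_two_mul_le (i : ℕ) : swapPairs S (2 * i) ≤ 2 * i := by
  rw [swapPairs_two_mul]; split_ifs <;> omega

theorem le_swapPairs_two_mul_add_one (i : ℕ) : 2 * i + 1 ≤ swapPairs S (2 * i + 1) := by
  rw [swapPairs_two_mul_add_one]; split_ifs <;> omega

theorem swapPairs_le_succ (p : ℕ) : swapPairs S p ≤ p + 1 := by
  unfold swapPairs; split_ifs <;> omega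

theorem pred_le_swapPairs (p : ℕ) : p - 1 ≤ swapPairs S p := by
  unfold swapPairs; split_ifs <;> omega

theorem swapPairs_eq_self {p : ℕ} (h : ∀ i ∈ S, 2 * i + 2 < p) : swapPairs S p = p := by
  obtain ⟨i, rfl | rfl⟩ := Nat.even_or_odd' p
  · rw [swapPairs_two_mul, if_neg]
    rintro ⟨hi, hS⟩
    have := h _ hS
    omega
  · rw [swapPairs_two_mul_add_one, if_neg]
    intro hS
    have := h _ hS
    omega

theorem swapPairs_lt {M p : ℕ} (h : ∀ i ∈ S, 2 * i + 2 < M) (hp : p < M) :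
    swapPairs S p < M := by
  obtain ⟨i, rfl | rfl⟩ := Nat.even_or_odd' p
  · exact (swapPairs_two_mul_le i).trans_lt hp
  · rw [swapPairs_two_mul_add_one]
    split_ifs with hS
    exacts [h i hS, hp]

theorem sum_range_comp_swapPairs {A : Type*} [AddCommMonoid A] {M : ℕ}
    (h : ∀ i ∈ S, 2 * i + 2 < M) (f : ℕ → A) :
    ∑ p ∈ range M, f (swapPairs S p) = ∑ p ∈ range M, f p :=
  sum_nbij' (swapPairs S) (swapPairs S)
    (fun _ hp => mem_range.2 (swapPairs_lt h (mem_range.1 hp)))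
    (fun _ hp => mem_range.2 (swapPairs_lt h (mem_range.1 hp)))
    (fun p _ => swapPairs_involutive p) (fun p _ => swapPairs_involutive p) (fun _ _ => rfl)

end SwapPairs

section Shift

variable (S : Finset ℕ)

def shift (p : ℕ) : ℕ := #{i ∈ S | p < 2 * i + 2}

def forcedDrop (p : ℕ) : ℕ := #{i ∈ S | 2 * i + 1 = p}

variable {S}

theorem shift_eq_shift_succ_add_forcedDrop (p : ℕ) :
    shift S p = shift S (p + 1) + forcedDrop S p := by
  rw [shift, shift, forcedDrop, ← card_union_of_disjoint, ← filter_or]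
  · congr 1
    ext i
    simp only [mem_filter]
    exact and_congr_right fun _ => by omega
  · exact disjoint_filter.2 fun i _ h => by omega

theorem shift_antitone : Antitone (shift S) :=
  antitone_nat_of_succ_le fun p => by
    rw [shift_eq_shift_succ_add_forcedDrop p]; exact Nat.le_add_right _ _

theorem shift_eq_zero {p : ℕ} (h : ∀ i ∈ S, 2 * i + 2 ≤ p) : shift S p = 0 :=
  card_eq_zero.2 (filter_eq_empty_iff.2 fun i hi => by have := h i hi; omega)

theorem forcedDrop_two_mul (i : ℕ) : forcedDrop S (2 * i) = 0 :=
  card_eq_zero.2 (filter_eq_empty_iff.2 fun j _ => by omega)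

theorem forcedDrop_two_mul_add_one (i : ℕ) :
    forcedDrop S (2 * i + 1) = if i ∈ S then 1 else 0 := by
  rw [forcedDrop, show ({j ∈ S | 2 * j + 1 = 2 * i + 1} : Finset ℕ) = {j ∈ S | j = i} by
    congr 1; ext j; omega, filter_eq']
  split_ifs <;> simp

theorem sum_range_shift {M : ℕ} (h : ∀ i ∈ S, 2 * i + 2 ≤ M) :
    ∑ p ∈ range M, shift S p = ∑ i ∈ S, (2 * i + 2) := by
  simp only [shift, card_filter]
  rw [sum_comm]
  refine sum_congr rfl fun i hi => ?_
  rw [← card_filter, show ({p ∈ range M | p < 2 * i + 2} : Finset ℕ) = range (2 * i + 2) by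
    ext p; simp only [mem_filter, mem_range]; have := h i hi; omega, card_range]

end Shift

structure IsCylindric (n : ℕ) (ab : (ℕ → ℕ) × (ℕ → ℕ)) : Prop where
  fst_succ_le : ∀ i, ab.1 (i + 1) ≤ ab.1 i
  snd_succ_le : ∀ i, ab.2 (i + 1) ≤ ab.2 i
  snd_le_fst : ∀ i, ab.2 i ≤ ab.1 i
  fst_add_two_le_snd : ∀ i, ab.1 (i + 2) ≤ ab.2 i
  fst_eq_zero : ∀ i, n ≤ i → ab.1 i = 0
  snd_eq_zero : ∀ i, n ≤ i → ab.2 i = 0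

/-- `d` is a partition with at most `M` parts, listed as a weakly decreasing sequence, with a
strict descent from position `2 * i + 1` to `2 * i + 2` at every mark `i ∈ S ⊆ [0, m)`. -/
structure IsMarked (m M : ℕ) (Sd : Finset ℕ × (ℕ → ℕ)) : Prop where
  subset_range : Sd.1 ⊆ range m
  antitone : Antitone Sd.2
  lt_of_mem : ∀ i ∈ Sd.1, Sd.2 (2 * i + 2) < Sd.2 (2 * i + 1)
  eq_zero : ∀ p, M ≤ p → Sd.2 p = 0

theorem isCylindric_and_iff {n : ℕ} {ab : (ℕ → ℕ) × (ℕ → ℕ)} {P : Prop} :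
    IsCylindric n ab ∧ P ↔
      (∀ i, ab.1 (i + 1) ≤ ab.1 i) ∧ (∀ i, ab.2 (i + 1) ≤ ab.2 i) ∧
      (∀ i, ab.2 i ≤ ab.1 i) ∧ (∀ i, ab.1 (i + 2) ≤ ab.2 i) ∧
      (∀ i, n ≤ i → ab.1 i = 0) ∧ (∀ i, n ≤ i → ab.2 i = 0) ∧ P :=
  ⟨fun ⟨⟨h1, h2, h3, h4, h5, h6⟩, h⟩ => ⟨h1, h2, h3, h4, h5, h6, h⟩,
    fun ⟨h1, h2, h3, h4, h5, h6, h⟩ => ⟨⟨h1, h2, h3, h4, h5, h6⟩, h⟩⟩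

section Sorting

variable {n : ℕ} {ab : (ℕ → ℕ) × (ℕ → ℕ)} {Sd : Finset ℕ × (ℕ → ℕ)}

def interleave (ab : (ℕ → ℕ) × (ℕ → ℕ)) (p : ℕ) : ℕ :=
  if p % 2 = 0 then ab.1 (p / 2) else ab.2 (p / 2)

@[simp] theorem interleave_two_mul (i : ℕ) : interleave ab (2 * i) = ab.1 i := by
  simp [interleave]

@[simp] theorem interleave_two_mul_add_one (i : ℕ) : interleave ab (2 * i + 1) = ab.2 i := by
  simp [interleave, Nat.mul_add_div]

variable (n ab) in
def crossings : Finset ℕ := {i ∈ range (n - 1) | ab.2 i < ab.1 (i + 1)}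

theorem mem_crossings {i : ℕ} : i ∈ crossings n ab ↔ i < n - 1 ∧ ab.2 i < ab.1 (i + 1) := by
  simp [crossings]

theorem IsCylindric.fst_succ_le_snd (hc : IsCylindric n ab) {i : ℕ} (hi : i ∉ crossings n ab) :
    ab.1 (i + 1) ≤ ab.2 i := by
  rw [mem_crossings, not_and, not_lt] at hi
  by_cases h : i < n - 1
  · exact hi h
  · rw [hc.fst_eq_zero (i + 1) (by omega)]
    exact Nat.zero_le _

variable (n) in
def toMarked (ab : (ℕ → ℕ) × (ℕ → ℕ)) : Finset ℕ × (ℕ → ℕ) :=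
  (crossings n ab, interleave ab ∘ swapPairs (crossings n ab))

theorem toMarked_snd_zero : (toMarked n ab).2 0 = ab.1 0 := by
  simp [toMarked, swapPairs, interleave]

theorem toMarked_snd_two_mul_add_one (i : ℕ) :
    (toMarked n ab).2 (2 * i + 1) = if i ∈ crossings n ab then ab.1 (i + 1) else ab.2 i := by
  simp only [toMarked, Function.comp_apply, swapPairs_two_mul_add_one]
  split_ifs
  · simpa [Nat.mul_succ] using interleave_two_mul (ab := ab) (i + 1)
  · simp

theorem toMarked_snd_two_mul_add_two (i : ℕ) :
    (toMarked n ab).2 (2 * i + 2) = if i ∈ crossings n ab then ab.2 i else ab.1 (i + 1) := by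
  simp only [toMarked, Function.comp_apply, swapPairs_two_mul_add_two]
  split_ifs
  · simp
  · simpa [Nat.mul_succ] using interleave_two_mul (ab := ab) (i + 1)

def ofMarked (Sd : Finset ℕ × (ℕ → ℕ)) : (ℕ → ℕ) × (ℕ → ℕ) :=
  (fun i => Sd.2 (swapPairs Sd.1 (2 * i)), fun i => Sd.2 (swapPairs Sd.1 (2 * i + 1)))

theorem ofMarked_toMarked : ofMarked (toMarked n ab) = ab := by
  ext i <;> simp [ofMarked, toMarked, swapPairs_involutive _]

theorem IsCylindric.isMarked_toMarked (hc : IsCylindric n ab) :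
    IsMarked (n - 1) (2 * n) (toMarked n ab) := by
  refine ⟨filter_subset _ _, antitone_nat_of_succ_le fun p => ?_, fun i hi => ?_, fun p hp => ?_⟩
  · obtain ⟨i, rfl | rfl⟩ := Nat.even_or_odd' p
    · rcases i with _ | i
      · rw [toMarked_snd_zero, toMarked_snd_two_mul_add_one (i := 0)]
        split_ifs
        exacts [hc.fst_succ_le 0, hc.snd_le_fst 0]
      · rw [toMarked_snd_two_mul_add_one,
          show 2 * (i + 1) = 2 * i + 2 by ring, toMarked_snd_two_mul_add_two]
        split_ifs
        exacts [hc.fst_add_two_le_snd i, hc.fst_succ_le (i + 1), hc.snd_succ_le i,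
          hc.snd_le_fst (i + 1)]
    · rw [toMarked_snd_two_mul_add_one, toMarked_snd_two_mul_add_two]
      split_ifs with h
      exacts [(mem_crossings.1 h).2.le, hc.fst_succ_le_snd h]
  · replace hi : i ∈ crossings n ab := hi
    rw [toMarked_snd_two_mul_add_one, toMarked_snd_two_mul_add_two, if_pos hi, if_pos hi]
    exact (mem_crossings.1 hi).2
  · have hC : ∀ i ∈ crossings n ab, 2 * i + 2 < p := fun i hi => by
      have := (mem_crossings.1 hi).1
      omega
    simp only [toMarked, Function.comp_apply, swapPairs_eq_self hC, interleave]
    split_ifs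
    exacts [hc.fst_eq_zero _ (by omega), hc.snd_eq_zero _ (by omega)]

theorem IsMarked.isCylindric_ofMarked (h : IsMarked (n - 1) (2 * n) Sd) :
    IsCylindric n (ofMarked Sd) := by
  have h0 := @swapPairs_two_mul_le Sd.1
  have h1 := @le_swapPairs_two_mul_add_one Sd.1
  have h2 := @swapPairs_le_succ Sd.1
  have h3 := @pred_le_swapPairs Sd.1
  have hS : ∀ {j}, j ∈ Sd.1 → j < n - 1 := fun hj => mem_range.1 (h.subset_range hj)
  refine ⟨fun i => h.antitone ?_, fun i => h.antitone ?_, fun i => h.antitone ?_,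
    fun i => h.antitone ?_, fun i hi => h.eq_zero _ ?_, fun i hi => h.eq_zero _ ?_⟩
  · have := h3 (2 * (i + 1)); have := h0 i; omega
  · have := h2 (2 * i + 1); have := h1 (i + 1); omega
  · have := h0 i; have := h1 i; omega
  · have := h2 (2 * i + 1); have := h3 (2 * (i + 2)); omega
  · rw [swapPairs_eq_self fun j hj => by have := hS hj; omega]; omega
  · rw [swapPairs_eq_self fun j hj => by have := hS hj; omega]; omega

theorem IsMarked.crossings_ofMarked {M : ℕ} (h : IsMarked (n - 1) M Sd) :
    crossings n (ofMarked Sd) = Sd.1 := by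
  ext i
  simp only [mem_crossings, ofMarked, show 2 * (i + 1) = 2 * i + 2 by ring,
    swapPairs_two_mul_add_one, swapPairs_two_mul_add_two]
  by_cases hi : i ∈ Sd.1
  · simp only [hi, if_true, iff_true]
    exact ⟨mem_range.1 (h.subset_range hi), h.lt_of_mem i hi⟩
  · simp only [hi, if_false, iff_false, not_and, not_lt]
    exact fun _ => h.antitone (Nat.le_succ _)

theorem interleave_ofMarked : interleave (ofMarked Sd) = Sd.2 ∘ swapPairs Sd.1 := by
  funext p
  obtain ⟨i, rfl | rfl⟩ := Nat.even_or_odd' p <;> simp [ofMarked]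

theorem IsMarked.toMarked_ofMarked {M : ℕ} (h : IsMarked (n - 1) M Sd) :
    toMarked n (ofMarked Sd) = Sd := by
  refine Prod.ext h.crossings_ofMarked (funext fun p => ?_)
  simp [toMarked, h.crossings_ofMarked, interleave_ofMarked, swapPairs_involutive _]

theorem sum_range_two_mul {A : Type*} [AddCommMonoid A] (f : ℕ → A) (n : ℕ) :
    ∑ p ∈ range (2 * n), f p = ∑ i ∈ range n, (f (2 * i) + f (2 * i + 1)) := by
  induction n with
  | zero => simp
  | succ n ih =>
    rw [show 2 * (n + 1) = 2 * n + 1 + 1 by ring, sum_range_succ, sum_range_succ,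
      sum_range_succ, ih, add_assoc]

theorem sum_ofMarked (hS : ∀ i ∈ Sd.1, 2 * i + 2 < 2 * n) :
    ∑ i ∈ range n, ((ofMarked Sd).1 i + (ofMarked Sd).2 i) = ∑ p ∈ range (2 * n), Sd.2 p := by
  rw [← sum_range_comp_swapPairs hS, sum_range_two_mul]
  rfl

variable (n) in
theorem bijOn_toMarked (N : ℕ) :
    Set.BijOn (toMarked n) {ab | IsCylindric n ab ∧ ∑ i ∈ range n, (ab.1 i + ab.2 i) = N}
      {Sd | IsMarked (n - 1) (2 * n) Sd ∧ ∑ p ∈ range (2 * n), Sd.2 p = N} := by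
  have hS : ∀ {Sd : Finset ℕ × (ℕ → ℕ)}, IsMarked (n - 1) (2 * n) Sd →
      ∀ i ∈ Sd.1, 2 * i + 2 < 2 * n := fun h i hi => by
    have := mem_range.1 (h.subset_range hi); omega
  refine Set.InvOn.bijOn ⟨fun ab _ => ofMarked_toMarked, fun Sd h => h.1.toMarked_ofMarked⟩
    (fun ab ⟨hc, hN⟩ => ⟨hc.isMarked_toMarked, ?_⟩)
    (fun Sd ⟨h, hN⟩ => ⟨h.isCylindric_ofMarked, (sum_ofMarked (hS h)).trans hN⟩)
  rw [← sum_ofMarked (hS hc.isMarked_toMarked), ofMarked_toMarked]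
  exact hN

end Sorting

section Weights

variable {m M : ℕ} {Sd : Finset ℕ × (ℕ → ℕ)} {l : ℕ →₀ ℕ}

/-- `X ^ k` occurs in the `i`-th factor of `∏_{i<m} (1 + X^(2i+2)) · ∏_{t<M} (1 - X^(t+1))⁻¹`,
the second product being indexed by `i = m + t`. -/
def Admissible (m i k : ℕ) : Prop :=
  if i < m then k = 0 ∨ k = 2 * i + 2 else i - m + 1 ∣ k

instance (m i : ℕ) : DecidablePred (Admissible m i) := fun _ => by
  unfold Admissible; infer_instance

variable (m M) in
def admissibleWeights (N : ℕ) : Finset (ℕ →₀ ℕ) :=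
  {l ∈ finsuppAntidiag (range (m + M)) N | ∀ i ∈ range (m + M), Admissible m i (l i)}

variable (m M) in
noncomputable def toWeights (Sd : Finset ℕ × (ℕ → ℕ)) : ℕ →₀ ℕ :=
  Finsupp.onFinset (range (m + M))
    (fun i => if i < m then (if i ∈ Sd.1 then 2 * i + 2 else 0)
      else if i < m + M then
        (i - m + 1) * (Sd.2 (i - m) - (Sd.2 (i - m + 1) + forcedDrop Sd.1 (i - m)))
      else 0)
    fun i hi => mem_range.2 <| by
      by_contra h
      exact hi (by rw [if_neg (by omega), if_neg (by omega)])

theorem toWeights_of_lt {i : ℕ} (hi : i < m) :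
    toWeights m M Sd i = if i ∈ Sd.1 then 2 * i + 2 else 0 := by
  simp [toWeights, hi]

theorem toWeights_add {t : ℕ} (ht : t < M) :
    toWeights m M Sd (m + t) = (t + 1) * (Sd.2 t - (Sd.2 (t + 1) + forcedDrop Sd.1 t)) := by
  simp [toWeights, ht]

theorem toWeights_of_le {i : ℕ} (hi : m + M ≤ i) : toWeights m M Sd i = 0 := by
  simp only [toWeights, Finsupp.onFinset_apply]
  rw [if_neg (by omega), if_neg (by omega)]

theorem admissible_toWeights (i : ℕ) : Admissible m i (toWeights m M Sd i) := by
  by_cases hi : i < m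
  · rw [Admissible, if_pos hi, toWeights_of_lt hi]
    split_ifs <;> simp
  · rw [Admissible, if_neg hi]
    simp only [toWeights, Finsupp.onFinset_apply, if_neg hi]
    split_ifs
    exacts [dvd_mul_right _ _, dvd_zero _]

variable (m M) in
/-- `l (m + t) / (t + 1)` is the multiplicity of the part `t + 1`, so the sum counts the parts
exceeding `p`. -/
def ofWeights (l : ℕ →₀ ℕ) : Finset ℕ × (ℕ → ℕ) :=
  ({i ∈ range m | l i ≠ 0},
    fun p => ∑ t ∈ Ico p M, l (m + t) / (t + 1) + shift {i ∈ range m | l i ≠ 0} p)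

theorem isMarked_ofWeights (hmM : 2 * m ≤ M) (l : ℕ →₀ ℕ) : IsMarked m M (ofWeights m M l) := by
  refine ⟨filter_subset _ _, fun p q hpq => ?_, fun i hi => ?_, fun p hp => ?_⟩
  · exact add_le_add (sum_le_sum_of_subset (Ico_subset_Ico_left hpq)) (shift_antitone hpq)
  · have hshift := shift_eq_shift_succ_add_forcedDrop (S := {i ∈ range m | l i ≠ 0}) (2 * i + 1)
    rw [forcedDrop_two_mul_add_one, if_pos (show i ∈ {i ∈ range m | l i ≠ 0} from hi),
      show 2 * i + 1 + 1 = 2 * i + 2 from rfl] at hshift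
    have hsum : ∑ t ∈ Ico (2 * i + 2) M, l (m + t) / (t + 1) ≤
        ∑ t ∈ Ico (2 * i + 1) M, l (m + t) / (t + 1) :=
      sum_le_sum_of_subset (Ico_subset_Ico_left (Nat.le_succ _))
    simp only [ofWeights]
    omega
  · simp only [ofWeights, Ico_eq_empty_of_le hp, sum_empty, zero_add]
    refine shift_eq_zero fun i hi => ?_
    have := mem_range.1 (mem_filter.1 hi).1
    omega

theorem IsMarked.two_mul_add_two_le (h : IsMarked m M Sd) {i : ℕ} (hi : i ∈ Sd.1) :
    2 * i + 2 ≤ M := by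
  by_contra hM
  have := h.lt_of_mem i hi
  rw [h.eq_zero (2 * i + 1) (by omega)] at this
  exact Nat.not_lt_zero _ this

theorem IsMarked.succ_add_forcedDrop_le (h : IsMarked m M Sd) (p : ℕ) :
    Sd.2 (p + 1) + forcedDrop Sd.1 p ≤ Sd.2 p := by
  obtain ⟨i, rfl | rfl⟩ := Nat.even_or_odd' p
  · rw [forcedDrop_two_mul, add_zero]
    exact h.antitone (Nat.le_succ _)
  · rw [forcedDrop_two_mul_add_one]
    split_ifs with hi
    · exact h.lt_of_mem i hi
    · exact h.antitone (Nat.le_succ _)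

theorem IsMarked.ofWeights_toWeights (h : IsMarked m M Sd) :
    ofWeights m M (toWeights m M Sd) = Sd := by
  have hS : {i ∈ range m | toWeights m M Sd i ≠ 0} = Sd.1 := by
    ext i
    by_cases hi : i < m
    · simp only [mem_filter, mem_range, hi, true_and, toWeights_of_lt hi]
      split_ifs <;> simpa
    · simp only [mem_filter, mem_range, hi, false_and, false_iff]
      exact fun hS => hi (mem_range.1 (h.subset_range hS))
  refine Prod.ext hS (funext fun p => ?_)
  simp only [ofWeights, hS]
  have hbig : ∀ q, M ≤ q →
      ∑ t ∈ Ico q M, toWeights m M Sd (m + t) / (t + 1) + shift Sd.1 q = Sd.2 q := fun q hq => by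
    rw [Ico_eq_empty_of_le hq, sum_empty, zero_add, h.eq_zero q hq,
      shift_eq_zero fun i hi => (h.two_mul_add_two_le hi).trans hq]
  rcases le_total M p with hp | hp
  · exact hbig p hp
  induction hp using Nat.decreasingInduction with
  | self => exact hbig M le_rfl
  | of_succ k hk ih =>
    rw [sum_eq_sum_Ico_succ_bot hk, toWeights_add hk, Nat.mul_div_cancel_left _ k.succ_pos,
      shift_eq_shift_succ_add_forcedDrop k]
    have := h.succ_add_forcedDrop_le k
    omega

theorem toWeights_ofWeights (hl : ∀ i ∈ range (m + M), Admissible m i (l i))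
    (hsupp : l.support ⊆ range (m + M)) : toWeights m M (ofWeights m M l) = l := by
  ext i
  by_cases hi : i < m
  · have hli := hl i (mem_range.2 (by omega))
    rw [Admissible, if_pos hi] at hli
    rw [toWeights_of_lt hi]
    simp only [ofWeights, mem_filter, mem_range, hi, true_and]
    rcases hli with hli | hli <;> simp [hli]
  obtain ⟨t, rfl⟩ : ∃ t, i = m + t := ⟨i - m, by omega⟩
  by_cases ht : t < M
  · have hdvd := hl (m + t) (mem_range.2 (by omega))
    rw [Admissible, if_neg hi, show m + t - m + 1 = t + 1 by omega] at hdvd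
    simp only [toWeights_add ht, ofWeights]
    rw [sum_eq_sum_Ico_succ_bot ht, shift_eq_shift_succ_add_forcedDrop t, show ∀ a b c d : ℕ, a + b + (c + d) - ((b + c) + d) = a by omega]
    exact Nat.mul_div_cancel' hdvd
  · rw [toWeights_of_le (by omega),
      Finsupp.notMem_support_iff.1 fun h => by have := mem_range.1 (hsupp h); omega]

theorem sum_ofWeights (hmM : 2 * m ≤ M) (hl : ∀ i ∈ range (m + M), Admissible m i (l i)) :
    ∑ p ∈ range M, (ofWeights m M l).2 p = ∑ i ∈ range (m + M), l i := by
  have hdvd : ∀ t ∈ range M, (t + 1) * (l (m + t) / (t + 1)) = l (m + t) := fun t ht => by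
    have := hl (m + t) (mem_range.2 (by have := mem_range.1 ht; omega))
    rw [Admissible, if_neg (by omega), show m + t - m + 1 = t + 1 by omega] at this
    exact Nat.mul_div_cancel' this
  have hshift : ∀ i ∈ range m, (if l i ≠ 0 then 2 * i + 2 else 0) = l i := fun i hi => by
    have := hl i (mem_range.2 (by have := mem_range.1 hi; omega))
    rw [Admissible, if_pos (mem_range.1 hi)] at this
    rcases this with h | h <;> simp [h]
  simp only [ofWeights, sum_add_distrib]
  rw [sum_range_add, add_comm, range_eq_Ico,
    sum_Ico_Ico_comm 0 M fun _ t => l (m + t) / (t + 1), ← range_eq_Ico,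
    sum_range_shift fun i hi => by have := mem_range.1 (mem_filter.1 hi).1; omega,
    sum_filter, sum_congr rfl hshift]
  simp only [sum_const, ← range_eq_Ico, card_range, smul_eq_mul]
  rw [sum_congr rfl hdvd]

variable (M) in
theorem bijOn_ofWeights (hmM : 2 * m ≤ M) (N : ℕ) :
    Set.BijOn (ofWeights m M) (admissibleWeights m M N)
      {Sd | IsMarked m M Sd ∧ ∑ p ∈ range M, Sd.2 p = N} := by
  simp only [admissibleWeights, coe_filter, mem_finsuppAntidiag]
  refine Set.InvOn.bijOn ⟨fun l ⟨⟨_, hsupp⟩, hl⟩ => toWeights_ofWeights hl hsupp,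
      fun Sd ⟨h, _⟩ => h.ofWeights_toWeights⟩
    (fun l ⟨⟨hN, _⟩, hl⟩ => ⟨isMarked_ofWeights hmM l, (sum_ofWeights hmM hl).trans hN⟩)
    (fun Sd ⟨h, hN⟩ => ⟨⟨?_, Finsupp.support_onFinset_subset⟩,
      fun i _ => admissible_toWeights i⟩)
  rw [← sum_ofWeights hmM fun i _ => admissible_toWeights i, h.ofWeights_toWeights]
  exact hN

variable (m M) in
theorem prod_mk_admissible (k : Type*) [Field k] :
    ∏ i ∈ range (m + M), (mk fun j => if Admissible m i j then (1 : k) else 0) =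
      (∏ i ∈ range m, (1 + X ^ (2 * i + 2))) * (∏ i ∈ range M, (1 - X ^ (i + 1)))⁻¹ := by
  rw [prod_range_add, inv_prod_one_sub_X_pow _ _ fun i _ => i.succ_ne_zero]
  congr 1
  · refine prod_congr rfl fun i hi => ?_
    rw [one_add_X_pow_eq_mk (by omega)]
    simp only [Admissible, if_pos (mem_range.1 hi)]
  · refine prod_congr rfl fun i _ => ?_
    simp only [Admissible, if_neg (show ¬ m + i < m by omega), show m + i - m + 1 = i + 1 by omega]

end Weights

end CylindricPartition

open CylindricPartition

theorem stmt4_general (n : ℕ) :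
    (PowerSeries.mk fun N : ℕ =>
        (Set.ncard {ab : (ℕ → ℕ) × (ℕ → ℕ) |
            (∀ i, ab.1 (i + 1) ≤ ab.1 i) ∧ (∀ i, ab.2 (i + 1) ≤ ab.2 i) ∧
            (∀ i, ab.2 i ≤ ab.1 i) ∧ (∀ i, ab.1 (i + 2) ≤ ab.2 i) ∧
            (∀ i, n ≤ i → ab.1 i = 0) ∧ (∀ i, n ≤ i → ab.2 i = 0) ∧
            (∑ i ∈ Finset.range n, (ab.1 i + ab.2 i)) = N} : ℚ)) =
      (∏ j ∈ Finset.range (n - 1), (1 + (PowerSeries.X : PowerSeries ℚ) ^ (2 * j + 2))) *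
        (∏ j ∈ Finset.range (2 * n), (1 - (PowerSeries.X : PowerSeries ℚ) ^ (j + 1)))⁻¹ := by
  rw [← prod_mk_admissible, PowerSeries.ext_iff]
  intro N
  simp only [← isCylindric_and_iff, coeff_mk, coeff_prod_mk_ite]
  rw [(bijOn_toMarked n N).ncard_eq, ← (bijOn_ofWeights (2 * n) (by omega) N).ncard_eq,
    Set.ncard_coe_finset]
  rfl

/-- The generating function for cylindric partitions with profile `(2,0)` with at most `n`
parts in each row equals `(-q²;q²)_{n-1} / (q;q)_{2n}` for `n ≥ 1`.  A cylindric partition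
with profile `(2,0)` is a pair of weakly decreasing sequences `a, b` of nonnegative
integers, supported on the first `n` indices, with `a i ≥ b i` and `b i ≥ a (i+2)`. -/
theorem stmt4 (n : ℕ) (hn : 1 ≤ n) :
    (PowerSeries.mk fun N : ℕ =>
        (Set.ncard {ab : (ℕ → ℕ) × (ℕ → ℕ) |
            (∀ i, ab.1 (i + 1) ≤ ab.1 i) ∧ (∀ i, ab.2 (i + 1) ≤ ab.2 i) ∧
            (∀ i, ab.2 i ≤ ab.1 i) ∧ (∀ i, ab.1 (i + 2) ≤ ab.2 i) ∧
            (∀ i, n ≤ i → ab.1 i = 0) ∧ (∀ i, n ≤ i → ab.2 i = 0) ∧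
            (∑ i ∈ Finset.range n, (ab.1 i + ab.2 i)) = N} : ℚ)) =
      (∏ j ∈ Finset.range (n - 1), (1 + (PowerSeries.X : PowerSeries ℚ) ^ (2 * j + 2))) *
        (∏ j ∈ Finset.range (2 * n), (1 - (PowerSeries.X : PowerSeries ℚ) ^ (j + 1)))⁻¹ :=
  stmt4_general n
end

section
/- For every integer n ≥ 0: ∑_{n_1 ≥ 0} q^{n_1^2} [n choose n_1]_{q^2} = ∑_{r=-∞}^{∞} (-1)^r q^{2r^2} [2n choose n - 2r]_q. -/
open Finset

noncomputable section

abbrev F := RatFunc ℚ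

/-- The variable `q`, a transcendental element. -/
def q : F := RatFunc.X

/-- `(b;b)_n = ∏_{i=1}^n (1 - b^i)` -/
def pq (b : F) (n : ℕ) : F := ∏ i ∈ Finset.range n, (1 - b ^ (i + 1))

/-- Gaussian binomial coefficient in base `b`, zero when `k < 0` or `k > a`. -/
def qbin (b : F) (a k : ℤ) : F :=
  if 0 ≤ k ∧ k ≤ a then pq b a.toNat / (pq b k.toNat * pq b (a - k).toNat) else 0

/-- Primed Gaussian binomial: equals 1 when `a < 0` and `k = 0`. -/
def qbin' (b : F) (a k : ℤ) : F :=
  if a < 0 ∧ k = 0 then 1 else qbin b a k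

/-! Both sides equal `∏_{j<n} (1 + q^(2j+1))`. For the left side this is the Cauchy
`q`-binomial theorem `∑_k b^(k choose 2) z^k [n, k]_b = ∏_{j<n} (1 + b^j z)` at `b = q²` and
`z = q`. For the right side, the two-step `q`-Pascal rule
`[a+2, m] = q^m [a, m] + (1 + q^(a+1)) [a, m-1] + q^(a+2-m) [a, m-2]`, applied at `a = 2n`,
`m = n + 1 - 2r`, writes the summand of level `n + 1` as `(1 + q^(2n+1))` times the summand of
level `n` plus a difference `g(r) - g(r+1)` that telescopes away. -/

theorem Transcendental.not_isOfFinOrder {R A : Type*} [CommRing R] [Nontrivial R] [Ring A]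
    [Algebra R A] {x : A} (hx : Transcendental R x) : ¬IsOfFinOrder x := fun h ↦ by
  obtain ⟨n, hn, hxn⟩ := isOfFinOrder_iff_pow_eq_one.1 h
  exact hx.pow hn (hxn ▸ isAlgebraic_one)

lemma finsum_eq_mul_finsum_of_telescoping {M : Type*} [Ring M] {f₀ f₁ g : ℤ → M} (c : M)
    (hf₀ : f₀.HasFiniteSupport) (hf₁ : f₁.HasFiniteSupport) (hg : g.HasFiniteSupport)
    (h : ∀ r, f₁ r + g (r + 1) = g r + c * f₀ r) :
    ∑ᶠ r, f₁ r = c * ∑ᶠ r, f₀ r := by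
  have hg₁ : (fun r ↦ g (r + 1)).HasFiniteSupport :=
    Set.Finite.preimage (add_left_injective 1).injOn hg
  have hcf₀ : (fun r ↦ c * f₀ r).HasFiniteSupport :=
    hf₀.subset (Function.support_mul_subset_right _ _)
  have hshift : ∑ᶠ r, g (r + 1) = ∑ᶠ r, g r := finsum_comp_equiv (Equiv.addRight 1)
  have := finsum_congr h
  rw [finsum_add_distrib hf₁ hg₁, finsum_add_distrib hg hcf₀, hshift, add_comm] at this
  rw [mul_finsum' _ _ hf₀]
  exact add_left_cancel this

lemma two_mul_choose_two_add_self (k : ℕ) : 2 * k.choose 2 + k = k ^ 2 := by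
  induction k with
  | zero => rfl
  | succ k ih =>
    rw [Nat.choose_succ_succ', Nat.choose_one_right]
    linear_combination ih

section

variable {b : F}

lemma pq_succ (n : ℕ) : pq b (n + 1) = pq b n * (1 - b ^ (n + 1)) :=
  prod_range_succ _ _

lemma pq_ne_zero (hb : ¬IsOfFinOrder b) (n : ℕ) : pq b n ≠ 0 :=
  prod_ne_zero_iff.2 fun i _ h ↦
    hb (isOfFinOrder_iff_pow_eq_one.2 ⟨i + 1, i.succ_pos, (sub_eq_zero.1 h).symm⟩)

lemma qbin_of_not_mem {a k : ℤ} (h : ¬(0 ≤ k ∧ k ≤ a)) : qbin b a k = 0 := if_neg h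

lemma qbin_natCast {a k : ℕ} (h : k ≤ a) : qbin b a k = pq b a / (pq b k * pq b (a - k)) := by
  rw [qbin, if_pos (by omega), Int.toNat_natCast, Int.toNat_natCast, ← Nat.cast_sub h,
    Int.toNat_natCast]

lemma qbin_sub_right (a k : ℤ) : qbin b a (a - k) = qbin b a k := by
  unfold qbin
  rw [sub_sub_cancel, mul_comm]
  exact if_congr (by omega) rfl rfl

lemma qbin_zero_right (hb : ¬IsOfFinOrder b) {a : ℤ} (ha : 0 ≤ a) : qbin b a 0 = 1 := by
  rw [qbin, if_pos ⟨le_rfl, ha⟩, sub_zero, Int.toNat_zero,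
    show pq b 0 = 1 from prod_range_zero _, one_mul, div_self (pq_ne_zero hb _)]

lemma qbin_self (hb : ¬IsOfFinOrder b) {a : ℤ} (ha : 0 ≤ a) : qbin b a a = 1 := by
  rw [← qbin_sub_right, sub_self, qbin_zero_right hb ha]

lemma qbin_succ_succ_natCast (hb : ¬IsOfFinOrder b) (k m : ℕ) :
    qbin b (k + m + 2 : ℕ) (k + 1 : ℕ) =
      b ^ (k + 1) * qbin b (k + m + 1 : ℕ) (k + 1 : ℕ) + qbin b (k + m + 1 : ℕ) k := by
  rw [qbin_natCast (by omega), qbin_natCast (by omega), qbin_natCast (by omega),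
    show k + m + 2 - (k + 1) = m + 1 by omega, show k + m + 1 - (k + 1) = m by omega,
    show k + m + 1 - k = m + 1 by omega, pq_succ (k + m + 1), pq_succ k, pq_succ m]
  have hpq := pq_ne_zero hb
  have hk : (1 : F) - b ^ (k + 1) ≠ 0 := right_ne_zero_of_mul (pq_succ k ▸ hpq (k + 1))
  have hm : (1 : F) - b ^ (m + 1) ≠ 0 := right_ne_zero_of_mul (pq_succ m ▸ hpq (m + 1))
  field_simp [hpq]
  ring

lemma qbin_pascal (hb : ¬IsOfFinOrder b) {a : ℤ} (ha : 1 ≤ a) (k : ℤ) :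
    qbin b a k = b ^ k * qbin b (a - 1) k + qbin b (a - 1) (k - 1) := by
  rcases lt_trichotomy k 0 with hk | rfl | hk
  · rw [qbin_of_not_mem (by omega), qbin_of_not_mem (by omega), qbin_of_not_mem (by omega)]
    ring
  · rw [qbin_zero_right hb (by omega), qbin_zero_right hb (by omega), qbin_of_not_mem (by omega),
      zpow_zero, mul_one, add_zero]
  rcases lt_trichotomy k a with hka | rfl | hka
  · obtain ⟨k, rfl⟩ : ∃ k' : ℕ, k = (k' + 1 : ℕ) := ⟨(k - 1).toNat, by omega⟩
    obtain ⟨m, rfl⟩ : ∃ m : ℕ, a = (k + m + 2 : ℕ) := ⟨(a - k - 2).toNat, by omega⟩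
    rw [show ((k + m + 2 : ℕ) : ℤ) - 1 = (k + m + 1 : ℕ) by push_cast; ring,
      show ((k + 1 : ℕ) : ℤ) - 1 = k by push_cast; ring, zpow_natCast]
    exact qbin_succ_succ_natCast hb k m
  · rw [qbin_self hb (by omega), qbin_of_not_mem (by omega), qbin_self hb (by omega)]
    ring
  · rw [qbin_of_not_mem (by omega), qbin_of_not_mem (by omega), qbin_of_not_mem (by omega)]
    ring

lemma qbin_pascal' (hb : ¬IsOfFinOrder b) {a : ℤ} (ha : 1 ≤ a) (k : ℤ) :
    qbin b a k = qbin b (a - 1) k + b ^ (a - k) * qbin b (a - 1) (k - 1) := by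
  rw [← qbin_sub_right, qbin_pascal hb ha, ← qbin_sub_right (a - 1) (a - k),
    ← qbin_sub_right (a - 1) (a - k - 1), show a - 1 - (a - k) = k - 1 by ring,
    show a - 1 - (a - k - 1) = k by ring, add_comm]

lemma qbin_add_two (hb : ¬IsOfFinOrder b) (hb₀ : b ≠ 0) {a : ℤ} (ha : 0 ≤ a) (m : ℤ) :
    qbin b (a + 2) m = b ^ m * qbin b a m + (1 + b ^ (a + 1)) * qbin b a (m - 1) +
      b ^ (a + 2 - m) * qbin b a (m - 2) := by
  rw [qbin_pascal' hb (a := a + 2) (by omega), show a + 2 - 1 = a + 1 by ring,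
    qbin_pascal hb (a := a + 1) (by omega) m, qbin_pascal hb (a := a + 1) (by omega) (m - 1),
    add_sub_cancel_right, show m - 1 - 1 = m - 2 by ring]
  have hexp : b ^ (a + 2 - m) * b ^ (m - 1) = b ^ (a + 1) := by
    rw [← zpow_add₀ hb₀]
    ring_nf
  linear_combination qbin b a (m - 1) * hexp

theorem sum_pow_choose_two_mul_qbin (hb : ¬IsOfFinOrder b) (n : ℕ) (z : F) :
    ∑ k ∈ range (n + 1), b ^ k.choose 2 * z ^ k * qbin b n k =
      ∏ j ∈ range n, (1 + b ^ j * z) := by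
  induction n generalizing z with
  | zero => simp [qbin_zero_right hb]
  | succ n ih =>
    have hpascal (k : ℕ) :
        qbin b (n + 1 : ℕ) k = b ^ k * qbin b n k + qbin b n (k - 1 : ℤ) := by
      rw [qbin_pascal hb (by omega), Nat.cast_succ, add_sub_cancel_right, zpow_natCast]
    have hprod : ∏ j ∈ range (n + 1), (1 + b ^ j * z) =
        (1 + z) * ∏ j ∈ range n, (1 + b ^ j * (b * z)) := by
      rw [prod_range_succ', pow_zero, one_mul, mul_comm]
      simp only [pow_succ, mul_assoc]
    have hfirst : ∑ k ∈ range (n + 2), b ^ k.choose 2 * z ^ k * (b ^ k * qbin b n k) =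
        ∑ k ∈ range (n + 1), b ^ k.choose 2 * (b * z) ^ k * qbin b n k := by
      rw [sum_range_succ, qbin_of_not_mem (by omega), mul_zero, mul_zero, add_zero]
      exact sum_congr rfl fun k _ ↦ by ring
    have hsecond : ∑ k ∈ range (n + 2), b ^ k.choose 2 * z ^ k * qbin b n (k - 1 : ℤ) =
        z * ∑ k ∈ range (n + 1), b ^ k.choose 2 * (b * z) ^ k * qbin b n k := by
      rw [sum_range_succ', qbin_of_not_mem (by omega), mul_zero, add_zero, mul_sum]
      refine sum_congr rfl fun k _ ↦ ?_
      rw [Nat.choose_succ_succ', Nat.choose_one_right, Nat.cast_succ, add_sub_cancel_right]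
      ring
    simp only [hpascal, mul_add, sum_add_distrib]
    rw [hfirst, hsecond, hprod, ← ih]
    ring

theorem sum_pow_sq_mul_qbin_sq {c : F} (hc : ¬IsOfFinOrder c) (n : ℕ) :
    ∑ k ∈ range (n + 1), c ^ (k ^ 2) * qbin (c ^ 2) n k =
      ∏ j ∈ range n, (1 + c ^ (2 * j + 1)) := by
  have hc₂ : ¬IsOfFinOrder (c ^ 2) := fun h ↦ hc (h.of_pow two_ne_zero)
  convert sum_pow_choose_two_mul_qbin hc₂ n c using 2 with k _ j _
  · rw [← pow_mul, ← pow_add, two_mul_choose_two_add_self]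
  · rw [← pow_mul, ← pow_succ]

lemma hasFiniteSupport_mul_qbin (f : ℤ → F) {φ : ℤ → ℤ} (hφ : φ.Injective) (a : ℤ) :
    (fun r ↦ f r * qbin b a (φ r)).HasFiniteSupport := by
  refine ((Set.finite_Icc 0 a).preimage hφ.injOn).subset
    (Function.support_subset_iff'.2 fun r hr ↦ ?_)
  rw [qbin_of_not_mem hr, mul_zero]

def altTerm (b : F) (n : ℕ) (r : ℤ) : F :=
  (-1 : F) ^ r * b ^ (2 * r ^ 2) * qbin b (2 * n) (n - 2 * r)

def altTelescope (b : F) (n : ℕ) (r : ℤ) : F :=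
  (-1 : F) ^ r * b ^ (2 * r ^ 2) * b ^ (n + 1 - 2 * r) * qbin b (2 * n) (n + 1 - 2 * r)

lemma altTerm_succ_add_altTelescope (hb : ¬IsOfFinOrder b) (hb₀ : b ≠ 0) (n : ℕ) (r : ℤ) :
    altTerm b (n + 1) r + altTelescope b n (r + 1) =
      altTelescope b n r + (1 + b ^ (2 * n + 1)) * altTerm b n r := by
  have hexp : b ^ (2 * (r + 1) ^ 2) * b ^ ((n : ℤ) + 1 - 2 * (r + 1)) =
      b ^ (2 * r ^ 2) * b ^ ((n : ℤ) + 1 + 2 * r) := by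
    rw [← zpow_add₀ hb₀, ← zpow_add₀ hb₀]
    ring_nf
  unfold altTerm altTelescope
  rw [Nat.cast_succ, show 2 * ((n : ℤ) + 1) = 2 * n + 2 by ring,
    qbin_add_two hb hb₀ (by omega), zpow_add_one₀ (neg_ne_zero.2 one_ne_zero) r,
    show (n : ℤ) + 1 - 2 * r - 1 = n - 2 * r by ring,
    show (n : ℤ) + 1 - 2 * r - 2 = n + 1 - 2 * (r + 1) by ring,
    show 2 * (n : ℤ) + 2 - (n + 1 - 2 * r) = n + 1 + 2 * r by ring,
    show (2 * (n : ℤ) + 1) = (2 * n + 1 : ℕ) by push_cast; ring, zpow_natCast]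
  linear_combination -(-1 : F) ^ r * qbin b (2 * n) (n + 1 - 2 * (r + 1)) * hexp

lemma finsum_altTerm_zero (hb : ¬IsOfFinOrder b) : ∑ᶠ r, altTerm b 0 r = 1 := by
  rw [finsum_eq_single _ 0 fun r hr ↦ by
    rw [altTerm, qbin_of_not_mem (by omega), mul_zero]]
  simp [altTerm, qbin_zero_right hb]

theorem finsum_altTerm (hb : ¬IsOfFinOrder b) (hb₀ : b ≠ 0) (n : ℕ) :
    ∑ᶠ r, altTerm b n r = ∏ j ∈ range n, (1 + b ^ (2 * j + 1)) := by
  induction n with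
  | zero => exact finsum_altTerm_zero hb
  | succ n ih =>
    have hinj {c : ℤ} : Function.Injective fun r : ℤ ↦ c - 2 * r := fun r s h ↦ by
      simp only at h; omega
    have hterm (m : ℕ) : (altTerm b m).HasFiniteSupport :=
      hasFiniteSupport_mul_qbin (fun r ↦ (-1 : F) ^ r * b ^ (2 * r ^ 2)) hinj _
    have htelescope : (altTelescope b n).HasFiniteSupport :=
      hasFiniteSupport_mul_qbin (fun r ↦ (-1 : F) ^ r * b ^ (2 * r ^ 2) * b ^ (n + 1 - 2 * r))
        hinj _
    rw [finsum_eq_mul_finsum_of_telescoping _ (hterm n) (hterm (n + 1)) htelescope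
      (altTerm_succ_add_altTelescope hb hb₀ n), ih, prod_range_succ, mul_comm]

end

lemma q_ne_zero : q ≠ 0 := RatFunc.X_ne_zero

lemma not_isOfFinOrder_q : ¬IsOfFinOrder q := by
  rw [q, ← RatFunc.algebraMap_X]
  exact ((RatFunc.algebraMap_injective ℚ).isOfFinOrder_iff
    (f := (algebraMap (Polynomial ℚ) F).toMonoidHom)).not.2
    (Polynomial.transcendental_X ℚ).not_isOfFinOrder

theorem stmt6 (n : ℕ) :
    (∑ᶠ n1 : ℕ, q ^ (n1 ^ 2) * qbin (q ^ 2) (n : ℤ) (n1 : ℤ)) =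
      ∑ᶠ r : ℤ, (-1 : F) ^ r * q ^ (2 * r ^ 2) * qbin q (2 * (n : ℤ)) ((n : ℤ) - 2 * r) := by
  have hsupport :
      (Function.support fun k : ℕ ↦ q ^ (k ^ 2) * qbin (q ^ 2) n k) ⊆ range (n + 1) :=
    Function.support_subset_iff'.2 fun k hk ↦ by
      rw [qbin_of_not_mem (by rw [coe_range, Set.mem_Iio] at hk; omega), mul_zero]
  rw [finsum_eq_sum_of_support_subset _ hsupport, sum_pow_sq_mul_qbin_sq not_isOfFinOrder_q,
    ← finsum_altTerm not_isOfFinOrder_q q_ne_zero]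
  rfl
end
end
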